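/- Fix α ∈ ℝ, an integer r ≥ 2, a square-summable sequence z = (z₁, z₂, …) with z₁ ≤ α and z_i = 0 for all i > r, and a continuous function w : [0,∞) → ℝ with w(0) = 0. Then there exists exactly one pair (Z, η), where Z : [0,∞) → ℓ² is continuous and η : [0,∞) → [0,∞) is continuous, satisfying for all t ≥ 0: Z₁(t) = Γ_α( z₁ − ∫₀^· (Z₁(s) − Z₂(s)) ds + w(·) )(t); η(t) = Γ̂_α( z₁ − ∫₀^· (Z₁(s) − Z₂(s)) ds + w(·) )(t); Z₂(t) = z₂ − ∫₀^t (Z₂(s) − Z₃(s)) ds + η(t); Z_i(t) = z_i − ∫₀^t (Z_i(s) − Z_{i+1}(s)) ds for each i ∈ {3, …, r}; and Z_i(t) = 0 for each i > r. -/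

import Mathlib

open Filter Topology
open scoped NNReal

/-- The one-dimensional Skorohod map with reflecting barrier at `α`:
`Γ_α(f)(t) = f(t) − sup_{s ∈ [0,t]} (f(s) − α)⁺`. -/
noncomputable def SkorohodMap (α : ℝ) (f : ℝ≥0 → ℝ) (t : ℝ≥0) : ℝ :=
  f t - sSup ((fun s => max (f s - α) 0) '' Set.Icc 0 t)

/-- The regulator part of the one-dimensional Skorohod map:
`Γ̂_α(f)(t) = sup_{s ∈ [0,t]} (f(s) − α)⁺`. -/
noncomputable def SkorohodMapHat (α : ℝ) (f : ℝ≥0 → ℝ) (t : ℝ≥0) : ℝ :=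
  sSup ((fun s => max (f s - α) 0) '' Set.Icc 0 t)

open Set

namespace Stmt19


variable {h f g : ℝ≥0 → ℝ}

lemma img_ne (h : ℝ≥0 → ℝ) (t : ℝ≥0) : (h '' Set.Icc 0 t).Nonempty :=
  ⟨h 0, ⟨0, ⟨le_rfl, (zero_le : (0:ℝ≥0) ≤ t)⟩, rfl⟩⟩

lemma img_bdd (hh : Continuous h) (t : ℝ≥0) : BddAbove (h '' Set.Icc 0 t) :=
  (isCompact_Icc.image hh).bddAbove

lemma runSup_mono (hh : Continuous h) : Monotone (fun t => sSup (h '' Set.Icc 0 t)) := by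
  intro a b hab
  exact csSup_le_csSup (img_bdd hh b) (img_ne h a)
    (Set.image_mono (Set.Icc_subset_Icc le_rfl hab))

lemma runSup_le (hh : Continuous h) {t : ℝ≥0} {B : ℝ} (hB : ∀ s, s ≤ t → h s ≤ B) :
    sSup (h '' Set.Icc 0 t) ≤ B := by
  refine csSup_le (img_ne h t) ?_
  rintro x ⟨s, hs, rfl⟩
  exact hB s hs.2

lemma le_runSup (hh : Continuous h) {t s : ℝ≥0} (hs : s ≤ t) :
    h s ≤ sSup (h '' Set.Icc 0 t) :=
  le_csSup (img_bdd hh t) ⟨s, ⟨(zero_le : (0:ℝ≥0) ≤ s), hs⟩, rfl⟩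

/-- running sup of continuous function is continuous -/
lemma runSup_continuous (hh : Continuous h) :
    Continuous (fun t => sSup (h '' Set.Icc 0 t)) := by
  rw [Metric.continuous_iff]
  intro t₀ ε hε
  obtain ⟨δ, hδ, hδ'⟩ := Metric.continuous_iff.mp hh t₀ (ε/4) (by linarith)
  refine ⟨δ, hδ, fun t ht => ?_⟩
  have key : ∀ a b : ℝ≥0, a ≤ b → dist a t₀ < δ → dist b t₀ < δ →
      sSup (h '' Set.Icc 0 b) - sSup (h '' Set.Icc 0 a) < ε := by
    intro a b hab hda hdb
    have h1 : sSup (h '' Set.Icc 0 b) ≤ sSup (h '' Set.Icc 0 a) + ε/2 := by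
      refine runSup_le hh (fun s hs => ?_)
      by_cases hsa : s ≤ a
      · exact (le_runSup hh hsa).trans (by linarith)
      · push_neg at hsa
        have hsd : dist s t₀ < δ := by
          rw [NNReal.dist_eq] at *
          rcases le_total (s : ℝ) (t₀ : ℝ) with hc | hc
          · have h2 : (a : ℝ) ≤ s := by exact_mod_cast hsa.le
            rw [abs_sub_comm, abs_of_nonneg (by linarith)]
            calc (t₀ : ℝ) - s ≤ (t₀ : ℝ) - a := by linarith
            _ ≤ |(a : ℝ) - t₀| := by rw [abs_sub_comm]; exact le_abs_self _
            _ < δ := hda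
          · have h2 : (s : ℝ) ≤ b := by exact_mod_cast hs
            rw [abs_of_nonneg (by linarith)]
            calc (s : ℝ) - t₀ ≤ (b : ℝ) - t₀ := by linarith
            _ ≤ |(b : ℝ) - t₀| := le_abs_self _
            _ < δ := hdb
        have hs1 : |h s - h t₀| < ε/4 := hδ' s hsd
        have hs2 : |h a - h t₀| < ε/4 := hδ' a hda
        have h3 : h a ≤ sSup (h '' Set.Icc 0 a) := le_runSup hh le_rfl
        rw [abs_sub_lt_iff] at hs1 hs2
        linarith [hs1.1, hs2.2]
    linarith [h1]
  rw [Real.dist_eq, abs_sub_lt_iff]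
  rcases le_total t t₀ with hc | hc
  · constructor
    · have := runSup_mono hh hc
      simp only at this; linarith
    · exact key t t₀ hc ht (by simp [dist_self, hδ])
  · constructor
    · exact key t₀ t hc (by simp [dist_self, hδ]) ht
    · have := runSup_mono hh hc
      simp only at this; linarith

/-- Lipschitz property of the running sup -/
lemma runSup_diff_le (hf : Continuous f) (hg : Continuous g) {t : ℝ≥0} {B : ℝ}
    (hB : ∀ s, s ≤ t → |f s - g s| ≤ B) :
    |sSup (f '' Set.Icc 0 t) - sSup (g '' Set.Icc 0 t)| ≤ B := by
  have hle : ∀ (f g : ℝ≥0 → ℝ), Continuous f → Continuous g → (∀ s, s ≤ t → |f s - g s| ≤ B) →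
      sSup (f '' Set.Icc 0 t) ≤ sSup (g '' Set.Icc 0 t) + B := by
    intro f g hf hg hB
    refine runSup_le hf (fun s hs => ?_)
    have := le_runSup hg hs
    have h1 := (abs_sub_le_iff.mp (hB s hs)).1
    linarith
  rw [abs_sub_le_iff]
  constructor
  · linarith [hle f g hf hg hB]
  · linarith [hle g f hg hf (fun s hs => by rw [abs_sub_comm]; exact hB s hs)]

variable {α : ℝ} {f g : ℝ≥0 → ℝ}

lemma hat_continuous (hf : Continuous f) : Continuous (SkorohodMapHat α f) :=
  runSup_continuous (by continuity)

lemma map_continuous (hf : Continuous f) : Continuous (SkorohodMap α f) :=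
  hf.sub (hat_continuous hf)

lemma hat_nonneg (hf : Continuous f) (t : ℝ≥0) : 0 ≤ SkorohodMapHat α f t := by
  have := le_runSup (h := fun s => max (f s - α) 0) (by continuity) (zero_le : (0:ℝ≥0) ≤ t)
  exact le_trans (le_max_right _ _) this

lemma hat_diff_le (hf : Continuous f) (hg : Continuous g) {t : ℝ≥0} {B : ℝ}
    (hB : ∀ s, s ≤ t → |f s - g s| ≤ B) :
    |SkorohodMapHat α f t - SkorohodMapHat α g t| ≤ B := by
  refine runSup_diff_le (by continuity) (by continuity) (fun s hs => ?_)
  refine le_trans (abs_max_sub_max_le_abs _ _ _) ?_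
  have : f s - α - (g s - α) = f s - g s := by ring
  rw [this]; exact hB s hs

lemma map_diff_le (hf : Continuous f) (hg : Continuous g) {t : ℝ≥0} {B : ℝ}
    (hB : ∀ s, s ≤ t → |f s - g s| ≤ B) :
    |SkorohodMap α f t - SkorohodMap α g t| ≤ 2 * B := by
  have h1 := hat_diff_le (α := α) hf hg hB
  have h2 := hB t le_rfl
  simp only [SkorohodMap, SkorohodMapHat] at *
  set A := sSup ((fun s => max (f s - α) 0) '' Set.Icc 0 t)
  set A' := sSup ((fun s => max (g s - α) 0) '' Set.Icc 0 t)
  have habs : |f t - A - (g t - A')| ≤ |f t - g t| + |A - A'| := by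
    rw [show f t - A - (g t - A') = (f t - g t) - (A - A') by ring]
    exact abs_sub _ _
  linarith


/-- the coupled integrand -/

noncomputable def cv (X : ℝ≥0 → ℕ → ℝ) (i : ℕ) : ℝ → ℝ :=
  fun s => X s.toNNReal i - X s.toNNReal (i + 1)

noncomputable def itg (X : ℝ≥0 → ℕ → ℝ) (i : ℕ) (t : ℝ≥0) : ℝ :=
  ∫ s in (0:ℝ)..(t:ℝ), cv X i s

noncomputable def freeP (α : ℝ) (z0 : ℝ) (w : ℝ≥0 → ℝ) (X : ℝ≥0 → ℕ → ℝ) : ℝ≥0 → ℝ :=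
  fun u => z0 - itg X 0 u + w u

noncomputable def Fop (α : ℝ) (r : ℕ) (z : ℕ → ℝ) (w : ℝ≥0 → ℝ) (X : ℝ≥0 → ℕ → ℝ) :
    ℝ≥0 → ℕ → ℝ := fun t i =>
  if i = 0 then SkorohodMap α (freeP α (z 0) w X) t
  else if i = 1 then z 1 - itg X 1 t + SkorohodMapHat α (freeP α (z 0) w X) t
  else if i < r then z i - itg X i t
  else 0

/-- all coordinates continuous -/
def Ct (X : ℝ≥0 → ℕ → ℝ) : Prop := ∀ i, Continuous (fun t => X t i)

variable {α : ℝ} {r : ℕ} {z : ℕ → ℝ} {w : ℝ≥0 → ℝ} {X Y : ℝ≥0 → ℕ → ℝ}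

lemma cv_continuous (hX : Ct X) (i : ℕ) : Continuous (cv X i) :=
  ((hX i).comp continuous_real_toNNReal).sub ((hX (i+1)).comp continuous_real_toNNReal)

lemma cv_intble (hX : Ct X) (i : ℕ) (a b : ℝ) :
    IntervalIntegrable (cv X i) MeasureTheory.volume a b :=
  (cv_continuous hX i).intervalIntegrable a b

lemma itg_continuous (hX : Ct X) (i : ℕ) : Continuous (itg X i) :=
  (intervalIntegral.continuous_primitive (cv_intble hX i) 0).comp NNReal.continuous_coe

lemma freeP_continuous (hw : Continuous w) (hX : Ct X) {z0 : ℝ} :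
    Continuous (freeP α z0 w X) :=
  ((continuous_const.sub (itg_continuous hX 0)).add hw)

lemma Fop_continuous (hw : Continuous w) (hX : Ct X) : Ct (Fop α r z w X) := by
  intro i
  unfold Fop
  split_ifs with h1 h2 h3
  · exact map_continuous (freeP_continuous hw hX)
  · exact (continuous_const.sub (itg_continuous hX 1)).add
      (hat_continuous (freeP_continuous hw hX))
  · exact continuous_const.sub (itg_continuous hX i)
  · exact continuous_const

lemma Fop_zero (t : ℝ≥0) {i : ℕ} (hi : r ≤ i) (hr : 2 ≤ r) : Fop α r z w X t i = 0 := by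
  unfold Fop
  have h1 : i ≠ 0 := by omega
  have h2 : i ≠ 1 := by omega
  have h3 : ¬ i < r := by omega
  simp [h1, h2, h3]

lemma intg_nonneg {g : ℝ≥0 → ℝ} (hg0 : ∀ s, 0 ≤ g s) (t : ℝ≥0) :
    0 ≤ ∫ u in (0:ℝ)..(t:ℝ), g u.toNNReal :=
  intervalIntegral.integral_nonneg t.coe_nonneg (fun u _ => hg0 _)

lemma itg_diff_le (hX : Ct X) (hY : Ct Y) {g : ℝ≥0 → ℝ} (hg : Continuous g)
    (hg0 : ∀ s, 0 ≤ g s) {t : ℝ≥0} (hb : ∀ s, s ≤ t → ∀ i, |X s i - Y s i| ≤ g s)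
    {s : ℝ≥0} (hs : s ≤ t) (i : ℕ) :
    |itg X i s - itg Y i s| ≤ 2 * ∫ u in (0:ℝ)..(t:ℝ), g u.toNNReal := by
  have hgi : ∀ a b : ℝ, IntervalIntegrable (fun u : ℝ => 2 * g u.toNNReal)
      MeasureTheory.volume a b :=
    fun a b => (continuous_const.mul (hg.comp continuous_real_toNNReal)).intervalIntegrable a b
  have h1 : itg X i s - itg Y i s = ∫ u in (0:ℝ)..(s:ℝ), (cv X i u - cv Y i u) :=
    (intervalIntegral.integral_sub (cv_intble hX i 0 s) (cv_intble hY i 0 s)).symm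
  rw [h1]
  calc |∫ u in (0:ℝ)..(s:ℝ), (cv X i u - cv Y i u)|
      ≤ ∫ u in (0:ℝ)..(s:ℝ), |cv X i u - cv Y i u| :=
        intervalIntegral.abs_integral_le_integral_abs s.coe_nonneg
    _ ≤ ∫ u in (0:ℝ)..(s:ℝ), 2 * g u.toNNReal := by
        refine intervalIntegral.integral_mono_on s.coe_nonneg
          (((cv_continuous hX i).sub (cv_continuous hY i)).abs.intervalIntegrable 0 s)
          (hgi 0 s) (fun u hu => ?_)
        have hut : u.toNNReal ≤ t := by
          rw [Real.toNNReal_le_iff_le_coe]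
          exact hu.2.trans (by exact_mod_cast hs)
        have b1 := hb u.toNNReal hut i
        have b2 := hb u.toNNReal hut (i+1)
        have := abs_sub (X u.toNNReal i - Y u.toNNReal i)
          (X u.toNNReal (i+1) - Y u.toNNReal (i+1))
        unfold cv
        rw [show X u.toNNReal i - X u.toNNReal (i+1) - (Y u.toNNReal i - Y u.toNNReal (i+1))
          = (X u.toNNReal i - Y u.toNNReal i) - (X u.toNNReal (i+1) - Y u.toNNReal (i+1)) by ring]
        calc |(X u.toNNReal i - Y u.toNNReal i) - (X u.toNNReal (i+1) - Y u.toNNReal (i+1))|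
            ≤ |X u.toNNReal i - Y u.toNNReal i| + |X u.toNNReal (i+1) - Y u.toNNReal (i+1)| :=
              abs_sub _ _
          _ ≤ 2 * g u.toNNReal := by linarith
    _ ≤ ∫ u in (0:ℝ)..(t:ℝ), 2 * g u.toNNReal := by
        refine intervalIntegral.integral_mono_interval le_rfl s.coe_nonneg
          (by exact_mod_cast hs) ?_ (hgi 0 t)
        filter_upwards with u
        exact mul_nonneg (by norm_num) (hg0 _)
    _ = 2 * ∫ u in (0:ℝ)..(t:ℝ), g u.toNNReal := intervalIntegral.integral_const_mul _ _

lemma freeP_diff_le (hX : Ct X) (hY : Ct Y) {g : ℝ≥0 → ℝ} (hg : Continuous g)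
    (hg0 : ∀ s, 0 ≤ g s) {t : ℝ≥0} (hb : ∀ s, s ≤ t → ∀ i, |X s i - Y s i| ≤ g s)
    {z0 : ℝ} : ∀ s, s ≤ t →
    |freeP α z0 w X s - freeP α z0 w Y s| ≤ 2 * ∫ u in (0:ℝ)..(t:ℝ), g u.toNNReal := by
  intro s hs
  have h := itg_diff_le hX hY hg hg0 hb hs 0
  unfold freeP
  rw [show z0 - itg X 0 s + w s - (z0 - itg Y 0 s + w s) = -(itg X 0 s - itg Y 0 s) by ring,
    abs_neg]
  exact h

/-- The key Lipschitz-type estimate for the Picard operator. -/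
lemma Fop_diff_le (hr : 2 ≤ r) (hw : Continuous w) (hX : Ct X) (hY : Ct Y)
    {g : ℝ≥0 → ℝ} (hg : Continuous g) (hg0 : ∀ s, 0 ≤ g s) {t : ℝ≥0}
    (hb : ∀ s, s ≤ t → ∀ i, |X s i - Y s i| ≤ g s) (i : ℕ) :
    |Fop α r z w X t i - Fop α r z w Y t i| ≤ 4 * ∫ u in (0:ℝ)..(t:ℝ), g u.toNNReal := by
  set I := ∫ u in (0:ℝ)..(t:ℝ), g u.toNNReal with hI
  have hI0 : 0 ≤ I := intg_nonneg hg0 t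
  have hfp := freeP_diff_le (α := α) (w := w) (z0 := z 0) hX hY hg hg0 hb
  unfold Fop
  split_ifs with h1 h2 h3
  · have := map_diff_le (α := α) (freeP_continuous hw hX) (freeP_continuous hw hY) hfp
    linarith
  · have hh := hat_diff_le (α := α) (freeP_continuous hw hX) (freeP_continuous hw hY) hfp
    have hi := itg_diff_le hX hY hg hg0 hb le_rfl 1
    rw [show z 1 - itg X 1 t + SkorohodMapHat α (freeP α (z 0) w X) t
        - (z 1 - itg Y 1 t + SkorohodMapHat α (freeP α (z 0) w Y) t)
        = (SkorohodMapHat α (freeP α (z 0) w X) t - SkorohodMapHat α (freeP α (z 0) w Y) t)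
          - (itg X 1 t - itg Y 1 t) by ring]
    calc _ ≤ |SkorohodMapHat α (freeP α (z 0) w X) t - SkorohodMapHat α (freeP α (z 0) w Y) t|
        + |itg X 1 t - itg Y 1 t| := abs_sub _ _
      _ ≤ 4 * I := by linarith
  · have hi := itg_diff_le hX hY hg hg0 hb le_rfl i
    rw [show z i - itg X i t - (z i - itg Y i t) = -(itg X i t - itg Y i t) by ring, abs_neg]
    linarith
  · rw [sub_self, abs_zero]; linarith


/-- the comparison function: `C * (4s)^n / n!` -/
noncomputable def gfun (C : ℝ) (n : ℕ) (s : ℝ≥0) : ℝ := C * ((4 * (s:ℝ)) ^ n / (n.factorial : ℝ))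

lemma gfun_cont (C : ℝ) (n : ℕ) : Continuous (gfun C n) := by
  unfold gfun
  fun_prop

lemma gfun_nonneg {C : ℝ} (hC : 0 ≤ C) (n : ℕ) (s : ℝ≥0) : 0 ≤ gfun C n s := by
  unfold gfun
  positivity

lemma gfun_mono {C : ℝ} (hC : 0 ≤ C) (n : ℕ) {s T : ℝ≥0} (h : s ≤ T) :
    gfun C n s ≤ gfun C n T := by
  unfold gfun
  have hsT : (s : ℝ) ≤ T := by exact_mod_cast h
  gcongr

lemma gfun_summable {C : ℝ} (T : ℝ≥0) : Summable (fun n => gfun C n T) :=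
  (Real.summable_pow_div_factorial (4 * T)).mul_left C

lemma intg_gfun (C : ℝ) (n : ℕ) (t : ℝ≥0) :
    (4 : ℝ) * ∫ u in (0:ℝ)..(t:ℝ), gfun C n u.toNNReal = gfun C (n+1) t := by
  have hcongr : ∫ u in (0:ℝ)..(t:ℝ), gfun C n u.toNNReal
      = ∫ u in (0:ℝ)..(t:ℝ), (C * 4 ^ n / (n.factorial : ℝ)) * u ^ n := by
    refine intervalIntegral.integral_congr (fun u hu => ?_)
    rw [Set.uIcc_of_le t.coe_nonneg] at hu
    unfold gfun
    rw [Real.coe_toNNReal u hu.1, mul_pow]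
    ring
  rw [hcongr, intervalIntegral.integral_const_mul, integral_pow]
  unfold gfun
  have h1 : ((n+1).factorial : ℝ) = ((n:ℝ)+1) * (n.factorial : ℝ) := by
    push_cast [Nat.factorial_succ]; ring
  have h2 : (n.factorial : ℝ) ≠ 0 := by exact_mod_cast (Nat.factorial_pos n).ne'
  have h3 : ((n:ℝ)+1) ≠ 0 := by positivity
  rw [h1, mul_pow]
  push_cast
  field_simp
  ring

/-- The Picard iteration bound. -/
lemma picard_bound (hr : 2 ≤ r) (hw : Continuous w) {T : ℝ≥0} {C : ℝ} (hC : 0 ≤ C)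
    (U V : ℕ → ℝ≥0 → ℕ → ℝ) (hU : ∀ m, Ct (U m)) (hV : ∀ m, Ct (V m))
    (hUs : ∀ m, U (m+1) = Fop α r z w (U m)) (hVs : ∀ m, V (m+1) = Fop α r z w (V m))
    (h0 : ∀ s, s ≤ T → ∀ i, |U 0 s i - V 0 s i| ≤ C) :
    ∀ n, ∀ s, s ≤ T → ∀ i, |U n s i - V n s i| ≤ gfun C n s := by
  intro n
  induction n with
  | zero =>
    intro s hs i
    simpa [gfun] using h0 s hs i
  | succ n ih =>
    intro s hs i
    rw [hUs n, hVs n]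
    refine le_trans (Fop_diff_le hr hw (hU n) (hV n) (gfun_cont C n) (gfun_nonneg hC n)
      (t := s) (fun u hu j => ih u (hu.trans hs) j) i) ?_
    exact le_of_eq (intg_gfun C n s)

/-- bound on a compact time interval for a function with finitely many nonzero coords -/
lemma bound_on_compact {X : ℝ≥0 → ℕ → ℝ} (hX : Ct X) (hz : ∀ t : ℝ≥0, ∀ i, r ≤ i → X t i = 0)
    (T : ℝ≥0) : ∃ C : ℝ, 0 ≤ C ∧ ∀ s, s ≤ T → ∀ i, |X s i| ≤ C := by
  set m : ℝ≥0 → ℝ := fun s => ∑ j ∈ Finset.range r, |X s j| with hm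
  have hmc : Continuous m := continuous_finset_sum _ (fun j _ => (hX j).abs)
  obtain ⟨s₀, hs₀, hmax⟩ := isCompact_Icc.exists_isMaxOn (Set.nonempty_Icc.2 (zero_le : (0:ℝ≥0) ≤ T))
    hmc.continuousOn
  refine ⟨m s₀, ?_, ?_⟩
  · exact Finset.sum_nonneg (fun j _ => abs_nonneg _)
  · intro s hs i
    have hsm : m s ≤ m s₀ := hmax ⟨(zero_le : (0:ℝ≥0) ≤ s), hs⟩
    by_cases hir : i < r
    · have : |X s i| ≤ m s :=
        Finset.single_le_sum (f := fun j => |X s j|) (fun j _ => abs_nonneg _)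
          (Finset.mem_range.2 hir)
      linarith
    · rw [hz s i (le_of_not_gt hir), abs_zero]
      exact le_trans (Finset.sum_nonneg (fun j _ => abs_nonneg _)) hsm

/-- uniqueness of fixed points of the Picard operator -/
lemma fixed_unique (hr : 2 ≤ r) (hw : Continuous w) {Z Z' : ℝ≥0 → ℕ → ℝ}
    (hZ : Ct Z) (hZ' : Ct Z')
    (hz0 : ∀ t : ℝ≥0, ∀ i, r ≤ i → Z t i = 0) (hz0' : ∀ t : ℝ≥0, ∀ i, r ≤ i → Z' t i = 0)
    (hfix : ∀ t i, Z t i = Fop α r z w Z t i) (hfix' : ∀ t i, Z' t i = Fop α r z w Z' t i) :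
    Z = Z' := by
  have hZe : Z = Fop α r z w Z := funext fun t => funext fun i => hfix t i
  have hZe' : Z' = Fop α r z w Z' := funext fun t => funext fun i => hfix' t i
  funext t i
  obtain ⟨C, hC0, hCb⟩ := bound_on_compact (X := fun s j => Z s j - Z' s j)
    (fun j => (hZ j).sub (hZ' j)) (fun s j hj => by show Z s j - Z' s j = 0; rw [hz0 s j hj, hz0' s j hj, sub_self]) t
  have hb := picard_bound hr hw hC0 (fun _ => Z) (fun _ => Z') (fun _ => hZ) (fun _ => hZ')
    (fun _ => hZe) (fun _ => hZe') (fun s hs i => hCb s hs i)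
  have hlim : Tendsto (fun n => gfun C n t) atTop (𝓝 0) := by
    have := (FloorSemiring.tendsto_pow_div_factorial_atTop (4 * (t:ℝ))).const_mul C
    simpa [gfun, mul_zero] using this
  have : |Z t i - Z' t i| ≤ 0 :=
    ge_of_tendsto hlim (Filter.Eventually.of_forall (fun n => hb n t le_rfl i))
  have := abs_nonpos_iff.mp this
  linarith [sub_eq_zero.mp this]

/-- Picard iterates -/
noncomputable def Xseq (α : ℝ) (r : ℕ) (z : ℕ → ℝ) (w : ℝ≥0 → ℝ) : ℕ → ℝ≥0 → ℕ → ℝ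
  | 0 => fun _ _ => 0
  | n+1 => Fop α r z w (Xseq α r z w n)

lemma Xseq_ct (hw : Continuous w) : ∀ n, Ct (Xseq α r z w n)
  | 0 => fun _ => continuous_const
  | n+1 => Fop_continuous hw (Xseq_ct hw n)

lemma Xseq_zero (hr : 2 ≤ r) : ∀ n, ∀ t : ℝ≥0, ∀ i, r ≤ i → Xseq α r z w n t i = 0
  | 0, _, _, _ => rfl
  | _+1, t, _, hi => Fop_zero t hi hr

/-- Existence of a fixed point of the Picard operator. -/
theorem exists_fixed (hr : 2 ≤ r) (hw : Continuous w) :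
    ∃ Z : ℝ≥0 → ℕ → ℝ, Ct Z ∧ (∀ t : ℝ≥0, ∀ i, r ≤ i → Z t i = 0) ∧
      (∀ t i, Z t i = Fop α r z w Z t i) := by
  set Q := Xseq α r z w with hQ
  -- difference bound on each compact interval
  have hbd : ∀ T : ℝ≥0, ∃ C : ℝ, 0 ≤ C ∧ ∀ n, ∀ s, s ≤ T → ∀ i,
      |Q (n+1) s i - Q n s i| ≤ gfun C n s := by
    intro T
    obtain ⟨C, hC0, hCb⟩ := bound_on_compact (X := Q 1) (Xseq_ct hw 1)
      (fun t j hj => Xseq_zero hr 1 t j hj) T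
    refine ⟨C, hC0, ?_⟩
    exact picard_bound hr hw hC0 (fun m => Q (m+1)) Q (fun m => Xseq_ct hw (m+1))
      (Xseq_ct hw) (fun m => rfl) (fun m => rfl)
      (fun s hs i => by simpa [hQ, Xseq] using hCb s hs i)
  -- summability of the consecutive differences
  have hsummable : ∀ t : ℝ≥0, ∀ i, Summable (fun n => Q (n+1) t i - Q n t i) := by
    intro t i
    obtain ⟨C, hC0, hCb⟩ := hbd t
    refine Summable.of_norm_bounded (gfun_summable (C := C) t) (fun n => ?_)
    simpa [Real.norm_eq_abs] using hCb n t le_rfl i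
  set Z : ℝ≥0 → ℕ → ℝ := fun t i => ∑' n, (Q (n+1) t i - Q n t i) with hZ
  -- partial sums converge to Z
  have hpart : ∀ N, ∀ t : ℝ≥0, ∀ i, ∑ m ∈ Finset.range N, (Q (m+1) t i - Q m t i) = Q N t i := by
    intro N t i
    rw [Finset.sum_range_sub (f := fun m => Q m t i)]
    simp [hQ, Xseq]
  have htend : ∀ t : ℝ≥0, ∀ i, Tendsto (fun N => Q N t i) atTop (𝓝 (Z t i)) := by
    intro t i
    have h1 := (hsummable t i).hasSum.tendsto_sum_nat
    simp only [hpart] at h1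
    exact h1
  -- tail bound
  have htail : ∀ T : ℝ≥0, ∀ C : ℝ, 0 ≤ C →
      (∀ n, ∀ s, s ≤ T → ∀ i, |Q (n+1) s i - Q n s i| ≤ gfun C n s) →
      ∀ N, ∀ s, s ≤ T → ∀ i, |Z s i - Q N s i| ≤ ∑' n, gfun C (n + N) T := by
    intro T C hC0 hCb N s hs i
    have hsum := hsummable s i
    have hshift : Summable (fun n => Q (n+N+1) s i - Q (n+N) s i) := by
      have := (summable_nat_add_iff (f := fun n => Q (n+1) s i - Q n s i) N).2 hsum
      simpa [add_right_comm] using this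
    have hkey : Z s i - Q N s i = ∑' n, (Q (n+N+1) s i - Q (n+N) s i) := by
      have h2 := Summable.sum_add_tsum_nat_add (f := fun n => Q (n+1) s i - Q n s i) N hsum
      rw [hpart N s i] at h2
      have : ∑' n, (Q (n+N+1) s i - Q (n+N) s i)
          = ∑' n, (Q (n+N+1) s i - Q (n+N) s i) := rfl
      simp only [hZ] at h2 ⊢
      linarith [h2]
    rw [hkey]
    have hb1 : ∀ n, |Q (n+N+1) s i - Q (n+N) s i| ≤ gfun C (n+N) T :=
      fun n => (hCb (n+N) s hs i).trans (gfun_mono hC0 (n+N) hs)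
    have hgs : Summable (fun n => gfun C (n+N) T) :=
      (summable_nat_add_iff (f := fun n => gfun C n T) N).2 (gfun_summable T)
    calc |∑' n, (Q (n+N+1) s i - Q (n+N) s i)|
        ≤ ∑' n, |Q (n+N+1) s i - Q (n+N) s i| := by
          simpa [Real.norm_eq_abs] using norm_tsum_le_tsum_norm (f := fun n =>
            Q (n+N+1) s i - Q (n+N) s i) (by simpa [Real.norm_eq_abs] using hshift.abs)
      _ ≤ ∑' n, gfun C (n+N) T := Summable.tsum_le_tsum hb1 hshift.abs hgs
  -- tails tend to zero
  have htail0 : ∀ T : ℝ≥0, ∀ C : ℝ,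
      Tendsto (fun N => ∑' n, gfun C (n + N) T) atTop (𝓝 0) :=
    fun T C => tendsto_sum_nat_add (fun n => gfun C n T)
  have htailnn : ∀ T : ℝ≥0, ∀ C : ℝ, 0 ≤ C → ∀ N, 0 ≤ ∑' n, gfun C (n + N) T := by
    intro T C hC0 N
    exact tsum_nonneg (fun n => gfun_nonneg hC0 _ _)
  -- continuity of Z
  have hZct : Ct Z := by
    intro i
    rw [continuous_iff_continuousAt]
    intro t₀
    set T : ℝ≥0 := t₀ + 1 with hT
    obtain ⟨C, hC0, hCb⟩ := hbd T
    have hunif : TendstoUniformlyOn (fun N t => Q N t i) (fun t => Z t i) atTop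
        (Set.Icc 0 T) := by
      rw [Metric.tendstoUniformlyOn_iff]
      intro ε hε
      have hev := (htail0 T C).eventually (eventually_lt_nhds hε)
      filter_upwards [hev] with N hN u hu
      rw [Real.dist_eq]
      calc |Z u i - Q N u i| ≤ ∑' n, gfun C (n+N) T := htail T C hC0 hCb N u hu.2 i
        _ < ε := hN
    have hco : ContinuousOn (fun t => Z t i) (Set.Icc 0 T) :=
      hunif.continuousOn (Filter.Eventually.of_forall (f := atTop) (fun N => (Xseq_ct hw N i).continuousOn)).frequently
    refine hco.continuousAt ?_
    refine Filter.mem_of_superset (Iio_mem_nhds (lt_add_of_pos_right t₀ one_pos)) ?_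
    exact fun x hx => ⟨(zero_le : (0:ℝ≥0) ≤ x), le_of_lt hx⟩
  -- zero coordinates
  have hZzero : ∀ t : ℝ≥0, ∀ i, r ≤ i → Z t i = 0 := by
    intro t i hi
    have : ∀ n, Q (n+1) t i - Q n t i = 0 := by
      intro n
      show Xseq α r z w (n+1) t i - Xseq α r z w n t i = 0
      rw [Xseq_zero hr (n+1) t i hi, Xseq_zero hr n t i hi, sub_self]
    simp only [hZ, this, tsum_zero]
  -- fixed point property
  have hfix : ∀ t i, Z t i = Fop α r z w Z t i := by
    intro t i
    obtain ⟨C, hC0, hCb⟩ := hbd t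
    set tail : ℕ → ℝ := fun N => ∑' n, gfun C (n + N) t with htl
    have h1 : ∀ N, |Fop α r z w Z t i - Q (N+1) t i| ≤ 4 * ((t:ℝ) * tail N) := by
      intro N
      have hd : ∀ s, s ≤ t → ∀ j, |Z s j - Q N s j| ≤ tail N :=
        fun s hs j => htail t C hC0 hCb N s hs j
      have hest := Fop_diff_le (α := α) (z := z) hr hw hZct (Xseq_ct hw N) (g := fun _ => tail N)
        continuous_const (fun _ => htailnn t C hC0 N) (t := t) (fun s hs j => hd s hs j) i
      have : Fop α r z w (Q N) t i = Q (N+1) t i := rfl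
      rw [this] at hest
      refine hest.trans (le_of_eq ?_)
      rw [intervalIntegral.integral_const, smul_eq_mul, sub_zero]
    have h2 : Tendsto (fun N => Q (N+1) t i) atTop (𝓝 (Z t i)) :=
      (htend t i).comp (tendsto_add_atTop_nat 1)
    have h3 : Tendsto (fun N => Q (N+1) t i) atTop (𝓝 (Fop α r z w Z t i)) := by
      rw [tendsto_iff_dist_tendsto_zero]
      have hb : ∀ N, dist (Q (N+1) t i) (Fop α r z w Z t i) ≤ 4 * ((t:ℝ) * tail N) := by
        intro N
        rw [Real.dist_eq, abs_sub_comm]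
        exact h1 N
      have h4 : Tendsto (fun N => 4 * ((t:ℝ) * tail N)) atTop (𝓝 0) := by
        have := ((htail0 t C).const_mul (t:ℝ)).const_mul (4:ℝ)
        simpa using this
      exact squeeze_zero (fun N => dist_nonneg) hb h4
    exact tendsto_nhds_unique h2 h3
  exact ⟨Z, hZct, hZzero, hfix⟩

end Stmt19


open Stmt19

/-- Unique solvability of the reflected limit system of Theorem 2.12, with a
given continuous driving path `w` (in the theorem, `w = √2 B`): there is exactly
one pair `(Z, η)` with `Z : [0,∞) → ℓ²` continuous and `η : [0,∞) → [0,∞)`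
continuous solving the system. Here `Z t i` denotes the paper's `Z_{i+1}(t)` and
`z i` the paper's `z_{i+1}`. -/
theorem stmt19 (α : ℝ) (r : ℕ) (hr : 2 ≤ r) (z : ℕ → ℝ)
    (hz2 : Summable (fun i => (z i) ^ 2)) (hz1 : z 0 ≤ α)
    (hzr : ∀ i : ℕ, r ≤ i → z i = 0)
    (w : ℝ≥0 → ℝ) (hw : Continuous w) (hw0 : w 0 = 0) :
    ∃! Zη : (ℝ≥0 → ℕ → ℝ) × (ℝ≥0 → ℝ),
      (∀ t, Summable (fun i => (Zη.1 t i) ^ 2)) ∧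
      (∀ t₀ : ℝ≥0,
        Tendsto (fun t => ∑' i, (Zη.1 t i - Zη.1 t₀ i) ^ 2) (𝓝 t₀) (𝓝 0)) ∧
      Continuous Zη.2 ∧ (∀ t, 0 ≤ Zη.2 t) ∧
      (∀ t : ℝ≥0,
        Zη.1 t 0 = SkorohodMap α
          (fun u => z 0 - (∫ s in (0 : ℝ)..(u : ℝ),
              (Zη.1 s.toNNReal 0 - Zη.1 s.toNNReal 1)) + w u) t) ∧
      (∀ t : ℝ≥0,
        Zη.2 t = SkorohodMapHat α
          (fun u => z 0 - (∫ s in (0 : ℝ)..(u : ℝ),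
              (Zη.1 s.toNNReal 0 - Zη.1 s.toNNReal 1)) + w u) t) ∧
      (∀ t : ℝ≥0,
        Zη.1 t 1 = z 1 - (∫ s in (0 : ℝ)..(t : ℝ),
            (Zη.1 s.toNNReal 1 - Zη.1 s.toNNReal 2)) + Zη.2 t) ∧
      (∀ i : ℕ, 2 ≤ i → i ≤ r - 1 → ∀ t : ℝ≥0,
        Zη.1 t i = z i - (∫ s in (0 : ℝ)..(t : ℝ),
            (Zη.1 s.toNNReal i - Zη.1 s.toNNReal (i + 1)))) ∧
      (∀ i : ℕ, r ≤ i → ∀ t : ℝ≥0, Zη.1 t i = 0) := by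
  obtain ⟨Z, hZct, hZzero, hfix⟩ := exists_fixed (α := α) (z := z) hr hw
  set η : ℝ≥0 → ℝ := fun t => SkorohodMapHat α (freeP α (z 0) w Z) t with hη
  have hfreeP : ∀ (X : ℝ≥0 → ℕ → ℝ), freeP α (z 0) w X
      = fun (u : ℝ≥0) => z 0 - (∫ s in (0 : ℝ)..(u : ℝ),
        (X s.toNNReal 0 - X s.toNNReal 1)) + w u := fun X => rfl
  have hcond : ∀ (X : ℝ≥0 → ℕ → ℝ), (∀ t i, X t i = Fop α r z w X t i) →
      (∀ t : ℝ≥0, X t 0 = SkorohodMap α (freeP α (z 0) w X) t) ∧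
      (∀ t : ℝ≥0, X t 1 = z 1 - (∫ s in (0 : ℝ)..(t : ℝ),
          (X s.toNNReal 1 - X s.toNNReal 2)) + SkorohodMapHat α (freeP α (z 0) w X) t) ∧
      (∀ i : ℕ, 2 ≤ i → i ≤ r - 1 → ∀ t : ℝ≥0,
        X t i = z i - (∫ s in (0 : ℝ)..(t : ℝ),
          (X s.toNNReal i - X s.toNNReal (i + 1)))) := by
    intro X hX
    refine ⟨fun t => ?_, fun t => ?_, fun i hi2 hir t => ?_⟩
    · rw [hX t 0]; rfl
    · rw [hX t 1]
      show (if (1:ℕ) = 0 then _ else if (1:ℕ) = 1 then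
        z 1 - itg X 1 t + SkorohodMapHat α (freeP α (z 0) w X) t
        else if (1:ℕ) < r then _ else _) = _
      norm_num
      rfl
    · rw [hX t i]
      have h0 : i ≠ 0 := by omega
      have h1 : i ≠ 1 := by omega
      have h2 : i < r := by omega
      show (if i = 0 then _ else if i = 1 then _ else if i < r then
        z i - itg X i t else _) = _
      rw [if_neg h0, if_neg h1, if_pos h2]
      rfl
  obtain ⟨hc1, hc2, hc3⟩ := hcond Z hfix
  refine ⟨⟨Z, η⟩, ⟨?_, ?_, ?_, ?_, ?_, ?_, ?_, ?_, ?_⟩, ?_⟩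
  · -- summability
    intro t
    dsimp only
    refine summable_of_ne_finset_zero (s := Finset.range r) (fun i hi => ?_)
    rw [hZzero t i (by simpa using hi)]
    norm_num
  · -- ℓ² continuity
    intro t₀
    dsimp only
    have heq : ∀ t : ℝ≥0, ∑' i, (Z t i - Z t₀ i) ^ 2
        = ∑ i ∈ Finset.range r, (Z t i - Z t₀ i) ^ 2 := by
      intro t
      refine tsum_eq_sum (fun i hi => ?_)
      rw [hZzero t i (by simpa using hi), hZzero t₀ i (by simpa using hi)]
      norm_num
    have hcont : Continuous (fun t => ∑ i ∈ Finset.range r, (Z t i - Z t₀ i) ^ 2) :=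
      continuous_finset_sum _ (fun i _ => ((hZct i).sub continuous_const).pow 2)
    have := hcont.tendsto t₀
    simp only [sub_self] at this
    have h0 : (∑ i ∈ Finset.range r, ((0:ℝ)) ^ 2) = 0 := by simp
    refine Tendsto.congr (fun t => (heq t).symm) ?_
    convert this using 2
    simp
  · -- continuity of η
    exact hat_continuous (freeP_continuous hw hZct)
  · -- nonnegativity of η
    exact fun t => hat_nonneg (freeP_continuous hw hZct) t
  · intro t; dsimp only; rw [hc1 t, hfreeP Z]
  · intro t; dsimp only; rw [hη]; simp only; rw [hfreeP Z]
  · intro t; dsimp only; rw [hc2 t, hη]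
  · intro i hi2 hir t; dsimp only; exact hc3 i hi2 hir t
  · intro i hi t; dsimp only; exact hZzero t i hi
  · -- uniqueness
    rintro ⟨Z', η'⟩ ⟨h1, h2, h3, h4, h5, h6, h7, h8, h9⟩
    simp only at h1 h2 h3 h4 h5 h6 h7 h8 h9
    -- coordinates of Z' are continuous
    have hct' : Ct Z' := by
      intro i
      rw [continuous_iff_continuousAt]
      intro t₀
      have hsq : ∀ t : ℝ≥0, Summable (fun j => (Z' t j - Z' t₀ j) ^ 2) := by
        intro t
        refine Summable.of_nonneg_of_le (fun j => sq_nonneg _) (fun j => ?_)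
          (((h1 t).mul_left 2).add ((h1 t₀).mul_left 2))
        nlinarith [sq_nonneg (Z' t j + Z' t₀ j), sq_nonneg (Z' t j - Z' t₀ j)]
      have hle : ∀ t : ℝ≥0, (Z' t i - Z' t₀ i) ^ 2 ≤ ∑' j, (Z' t j - Z' t₀ j) ^ 2 :=
        fun t => Summable.le_tsum (hsq t) i (fun j _ => sq_nonneg _)
      have hsq0 : Tendsto (fun t => (Z' t i - Z' t₀ i) ^ 2) (𝓝 t₀) (𝓝 0) :=
        squeeze_zero (fun t => sq_nonneg _) hle (h2 t₀)
      have habs : Tendsto (fun t => |Z' t i - Z' t₀ i|) (𝓝 t₀) (𝓝 0) := by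
        have hs := (Real.continuous_sqrt.tendsto 0).comp hsq0
        simp only [Function.comp_def, Real.sqrt_sq_eq_abs, Real.sqrt_zero] at hs
        exact hs
      show Tendsto (fun t => Z' t i) (𝓝 t₀) (𝓝 (Z' t₀ i))
      rw [tendsto_iff_dist_tendsto_zero]
      simpa [Real.dist_eq] using habs
    have hz0' : ∀ t : ℝ≥0, ∀ i, r ≤ i → Z' t i = 0 := fun t i hi => h9 i hi t
    have hfix' : ∀ t i, Z' t i = Fop α r z w Z' t i := by
      intro t i
      rcases Nat.lt_or_ge i r with hir | hir
      · match i, hir with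
        | 0, _ =>
          rw [h5 t]
          show _ = SkorohodMap α (freeP α (z 0) w Z') t
          rw [hfreeP Z']
        | 1, _ =>
          rw [h7 t, h6 t]
          show _ = (if (1:ℕ) = 0 then _ else if (1:ℕ) = 1 then
            z 1 - itg Z' 1 t + SkorohodMapHat α (freeP α (z 0) w Z') t
            else if (1:ℕ) < r then _ else _)
          norm_num
          rw [hfreeP Z']
          rfl
        | (j+2), hj =>
          rw [h8 (j+2) (by omega) (by omega) t]
          have h0 : (j+2 : ℕ) ≠ 0 := by omega
          have h1' : (j+2 : ℕ) ≠ 1 := by omega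
          show _ = (if (j+2 : ℕ) = 0 then _ else if (j+2 : ℕ) = 1 then _
            else if (j+2 : ℕ) < r then z (j+2) - itg Z' (j+2) t else _)
          rw [if_neg h0, if_neg h1', if_pos hj]
          rfl
      · rw [hz0' t i hir, Fop_zero t hir hr]
    have hZZ : Z' = Z := fixed_unique hr hw hct' hZct hz0' hZzero hfix' hfix
    have hηη : η' = η := by
      funext t
      rw [h6 t, hη]
      simp only
      rw [hZZ, hfreeP Z]
    rw [hZZ, hηη]
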